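/- arXiv:2011.11084 — 3 statements merged into one kernel-verified Lean document; each statement's English description precedes it below -/
import Mathlib

section
/- Let W be an n×n real matrix with smallest real eigenvalue ω_min < 0 and largest real eigenvalue equal to 1. For λ₁, λ₂ ∈ (ω_min⁻¹, 1) and σ₁², σ₂² > 0, if σ₁²·(I − λ₁W)ᵀ(I − λ₁W) = σ₂²·(I − λ₂W)ᵀ(I − λ₂W), then λ₁ = λ₂ and σ₁² = σ₂². -/
open Matrix

/-- Testing the matrix identity on an eigenvector gives a scalar identity. -/
lemma stmt_6_key {n : ℕ} (W : Matrix (Fin n) (Fin n) ℝ)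
    (lam₁ lam₂ s₁ s₂ ω : ℝ)
    (heq : s₁ • (((1 : Matrix (Fin n) (Fin n) ℝ) - lam₁ • W)ᵀ *
              ((1 : Matrix (Fin n) (Fin n) ℝ) - lam₁ • W)) =
           s₂ • (((1 : Matrix (Fin n) (Fin n) ℝ) - lam₂ • W)ᵀ *
              ((1 : Matrix (Fin n) (Fin n) ℝ) - lam₂ • W)))
    (v : Fin n → ℝ) (hv0 : v ≠ 0) (hv : W.mulVec v = ω • v) :
    s₁ * (1 - lam₁ * ω) ^ 2 = s₂ * (1 - lam₂ * ω) ^ 2 := by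
  have comp : ∀ lam s : ℝ,
      v ⬝ᵥ ((s • (((1 : Matrix (Fin n) (Fin n) ℝ) - lam • W)ᵀ *
        ((1 : Matrix (Fin n) (Fin n) ℝ) - lam • W))).mulVec v)
      = s * (1 - lam * ω) ^ 2 * (v ⬝ᵥ v) := by
    intro lam s
    have hS : ((1 : Matrix (Fin n) (Fin n) ℝ) - lam • W).mulVec v
        = (1 - lam * ω) • v := by
      rw [sub_mulVec, one_mulVec, smul_mulVec, hv, smul_smul, sub_smul, one_smul]
    rw [smul_mulVec, dotProduct_smul, dotProduct_mulVec, ← vecMul_vecMul,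
      vecMul_transpose, hS, ← dotProduct_mulVec, hS]
    simp [smul_smul]
    ring
  have h := congrArg (fun M => v ⬝ᵥ M.mulVec v) heq
  rw [comp lam₁ s₁, comp lam₂ s₂] at h
  have hvv : 0 < v ⬝ᵥ v := by
    have h' : v ⬝ᵥ v ≠ 0 := fun h0 => hv0 (dotProduct_self_eq_zero.mp h0)
    have h2 : 0 ≤ v ⬝ᵥ v := Finset.sum_nonneg fun i _ => mul_self_nonneg (v i)
    exact h2.lt_of_ne (Ne.symm h')
  exact mul_right_cancel₀ hvv.ne' h

/-- Identifiability of (λ, σ²) from the variance matrix σ²(S(λ)ᵀS(λ))⁻¹ on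
Λ = (1/ω_min, 1), where ω_min < 0 is the smallest real eigenvalue of W and the
largest real eigenvalue is 1. -/
theorem stmt_6 {n : ℕ}
    (W : Matrix (Fin n) (Fin n) ℝ) (ωmin : ℝ)
    (hωmin_neg : ωmin < 0)
    (hωmin_eig : ∃ v : Fin n → ℝ, v ≠ 0 ∧ W.mulVec v = ωmin • v)
    (hone_eig : ∃ v : Fin n → ℝ, v ≠ 0 ∧ W.mulVec v = (1 : ℝ) • v)
    (hbounds : ∀ ω : ℝ, (∃ v : Fin n → ℝ, v ≠ 0 ∧ W.mulVec v = ω • v) →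
      ωmin ≤ ω ∧ ω ≤ 1)
    (lam₁ lam₂ s₁ s₂ : ℝ)
    (hlam₁ : lam₁ ∈ Set.Ioo ωmin⁻¹ 1) (hlam₂ : lam₂ ∈ Set.Ioo ωmin⁻¹ 1)
    (hs₁ : 0 < s₁) (hs₂ : 0 < s₂)
    (heq : s₁ • (((1 : Matrix (Fin n) (Fin n) ℝ) - lam₁ • W)ᵀ *
              ((1 : Matrix (Fin n) (Fin n) ℝ) - lam₁ • W)) =
           s₂ • (((1 : Matrix (Fin n) (Fin n) ℝ) - lam₂ • W)ᵀ *
              ((1 : Matrix (Fin n) (Fin n) ℝ) - lam₂ • W))) :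
    lam₁ = lam₂ ∧ s₁ = s₂ := by
  obtain ⟨v, hv0, hv⟩ := hωmin_eig
  obtain ⟨u, hu0, hu⟩ := hone_eig
  have e1 : s₁ * (1 - lam₁ * 1) ^ 2 = s₂ * (1 - lam₂ * 1) ^ 2 :=
    stmt_6_key W lam₁ lam₂ s₁ s₂ 1 heq u hu0 hu
  have e2 : s₁ * (1 - lam₁ * ωmin) ^ 2 = s₂ * (1 - lam₂ * ωmin) ^ 2 :=
    stmt_6_key W lam₁ lam₂ s₁ s₂ ωmin heq v hv0 hv
  -- positivity facts
  have hm1 : 0 < 1 - lam₁ := by linarith [hlam₁.2]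
  have hm2 : 0 < 1 - lam₂ := by linarith [hlam₂.2]
  have hmin : ∀ lam : ℝ, ωmin⁻¹ < lam → 0 < 1 - lam * ωmin := by
    intro lam hl
    have := mul_lt_mul_of_neg_right hl hωmin_neg
    rw [inv_mul_cancel₀ hωmin_neg.ne] at this
    linarith
  have hq1 : 0 < 1 - lam₁ * ωmin := hmin _ hlam₁.1
  have hq2 : 0 < 1 - lam₂ * ωmin := hmin _ hlam₂.1
  set t₁ := Real.sqrt s₁ with ht₁def
  set t₂ := Real.sqrt s₂ with ht₂def
  have ht₁ : t₁ ^ 2 = s₁ := Real.sq_sqrt hs₁.le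
  have ht₂ : t₂ ^ 2 = s₂ := Real.sq_sqrt hs₂.le
  have ht₁pos : 0 < t₁ := Real.sqrt_pos.mpr hs₁
  have ht₂pos : 0 < t₂ := Real.sqrt_pos.mpr hs₂
  have sqeq : ∀ x y : ℝ, 0 < x → 0 < y → x ^ 2 = y ^ 2 → x = y := by
    intro x y hx hy h
    nlinarith [sq_nonneg (x - y), sq_nonneg (x + y)]
  have f1 : t₁ * (1 - lam₁) = t₂ * (1 - lam₂) := by
    apply sqeq _ _ (by positivity) (by positivity)
    rw [mul_pow, mul_pow, ht₁, ht₂]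
    simpa using e1
  have f2 : t₁ * (1 - lam₁ * ωmin) = t₂ * (1 - lam₂ * ωmin) := by
    apply sqeq _ _ (by positivity) (by positivity)
    rw [mul_pow, mul_pow, ht₁, ht₂]
    exact e2
  -- subtract: t₁ λ₁ (1 - ωmin) = t₂ λ₂ (1 - ωmin)
  have hne : (1 : ℝ) - ωmin ≠ 0 := by linarith
  have f3 : t₁ * lam₁ = t₂ * lam₂ := by
    have : t₁ * lam₁ * (1 - ωmin) = t₂ * lam₂ * (1 - ωmin) := by ring_nf; nlinarith [f1, f2]
    exact mul_right_cancel₀ hne this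
  have ft : t₁ = t₂ := by linarith [f1, f3]
  have hlam : lam₁ = lam₂ := by
    have := f3
    rw [ft] at this
    exact mul_left_cancel₀ ht₂pos.ne' this
  exact ⟨hlam, by rw [← ht₁, ← ht₂, ft]⟩
end

section
/- Let W be an n×n real matrix and X an n×k full-column-rank matrix (k < n) with M_X(ωI_n − W) = 0 for a real eigenvalue ω of W, and let C satisfy CCᵀ = I_{n−k}, CᵀC = M_X. If y = (I_n − λW)⁻¹(Xβ + σε) with I_n − λW invertible and λω ≠ 1, then Cy = (σ/(1 − λω))·Cε; in particular, the map (λ, β, σ) ↦ distribution of Cy depends on (λ, σ) only through σ/(1 − λω). -/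
open Matrix

/-- If M_X(ωI − W) = 0, CᵀC = M_X, CCᵀ = I, I − λW is invertible and
1 − λω ≠ 0, then C(I − λW)⁻¹ = (1 − λω)⁻¹ C and CX = 0. -/
theorem stmt_16 {n k : ℕ} (hk : k < n)
    (W : Matrix (Fin n) (Fin n) ℝ) (X : Matrix (Fin n) (Fin k) ℝ)
    (hX : X.rank = k)
    (M : Matrix (Fin n) (Fin n) ℝ)
    (hM : M = 1 - X * (Xᵀ * X)⁻¹ * Xᵀ)
    (ω : ℝ) (hω : ∃ v : Fin n → ℝ, v ≠ 0 ∧ W.mulVec v = ω • v)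
    (h : M * (ω • (1 : Matrix (Fin n) (Fin n) ℝ) - W) = 0)
    (C : Matrix (Fin (n - k)) (Fin n) ℝ)
    (hC1 : C * Cᵀ = 1) (hC2 : Cᵀ * C = M)
    (lam : ℝ)
    (hdet : ((1 : Matrix (Fin n) (Fin n) ℝ) - lam • W).det ≠ 0)
    (hlo : 1 - lam * ω ≠ 0) :
    C * ((1 : Matrix (Fin n) (Fin n) ℝ) - lam • W)⁻¹ = (1 - lam * ω)⁻¹ • C ∧
      C * X = 0 := by
  -- XᵀX is a unit
  have hrk : (Xᵀ * X).rank = k := by rw [X.rank_transpose_mul_self, hX]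
  have hU : IsUnit (Xᵀ * X) := by
    rw [← Matrix.mulVec_surjective_iff_isUnit]
    rw [Matrix.rank] at hrk
    have htop : LinearMap.range (Xᵀ * X).mulVecLin = ⊤ :=
      Submodule.eq_top_of_finrank_eq (by simpa using hrk)
    intro y
    exact LinearMap.range_eq_top.mp htop y
  have hUd : IsUnit (Xᵀ * X).det := (Matrix.isUnit_iff_isUnit_det _).mp hU
  -- M * X = 0
  have hMX : M * X = 0 := by
    rw [hM, Matrix.sub_mul, Matrix.one_mul, Matrix.mul_assoc (X * (Xᵀ * X)⁻¹),
      Matrix.mul_assoc X, Matrix.nonsing_inv_mul _ hUd, Matrix.mul_one, sub_self]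
  -- C * X = 0
  have hCX : C * X = 0 := by
    have : C * X = C * (M * X) := by
      rw [← hC2, ← Matrix.mul_assoc, ← Matrix.mul_assoc, hC1, Matrix.one_mul]
    rw [this, hMX, Matrix.mul_zero]
  -- C * M = C
  have hCM : C * M = C := by rw [← hC2, ← Matrix.mul_assoc, hC1, Matrix.one_mul]
  -- M * W = ω • M
  have hMW : M * W = ω • M := by
    have := h
    rw [Matrix.mul_sub, sub_eq_zero] at this
    rw [← this, Matrix.mul_smul, Matrix.mul_one]
  -- C * W = ω • C
  have hCW : C * W = ω • C := by
    rw [← hCM, Matrix.mul_assoc, hMW, Matrix.mul_smul, hCM]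
  -- C * (1 - lam • W) = (1 - lam*ω) • C
  have hkey : C * ((1 : Matrix (Fin n) (Fin n) ℝ) - lam • W) = (1 - lam * ω) • C := by
    rw [Matrix.mul_sub, Matrix.mul_one, Matrix.mul_smul, hCW, sub_smul, one_smul,
      smul_smul]
  refine ⟨?_, hCX⟩
  have hinv : ((1 : Matrix (Fin n) (Fin n) ℝ) - lam • W) *
      ((1 : Matrix (Fin n) (Fin n) ℝ) - lam • W)⁻¹ = 1 :=
    Matrix.mul_nonsing_inv _ (isUnit_iff_ne_zero.mpr hdet)
  calc C * ((1 : Matrix (Fin n) (Fin n) ℝ) - lam • W)⁻¹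
      = ((1 - lam * ω)⁻¹ • (C * ((1 : Matrix (Fin n) (Fin n) ℝ) - lam • W))) *
        ((1 : Matrix (Fin n) (Fin n) ℝ) - lam • W)⁻¹ := by
        rw [hkey, smul_smul, inv_mul_cancel₀ hlo, one_smul]
    _ = (1 - lam * ω)⁻¹ • C := by
        rw [Matrix.smul_mul, Matrix.mul_assoc, hinv, Matrix.mul_one]
end

section
/- Let W be an n×n real matrix and X an n×k full-column-rank matrix (k < n) with M_X(ωI_n − W) = 0 for a real eigenvalue ω of W. Then for any λ with det(I_n − λW) ≠ 0 and any y ∉ col(X), the profile log-likelihood l(λ) = −(n/2)·log(yᵀS(λ)ᵀM_X S(λ)y / n) + log|det(S(λ))| satisfies l(λ) = log|det(S(λ))| − n·log|1 − λω| − (n/2)·log(yᵀM_X y) + (n/2)log n; in particular, l(λ) decomposes as a function of λ alone plus a function of y alone. -/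
open Matrix

/-- When M_X(ωI − W) = 0, the profile log-likelihood
l(λ) = −(n/2)log(yᵀS(λ)ᵀM_X S(λ)y/n) + log|det S(λ)| equals
log|det S(λ)| − n log|1 − λω| − (n/2)log(yᵀM_X y) + (n/2)log n, for every
λ with det S(λ) ≠ 0 and every y ∉ col(X). -/
theorem stmt_18 {n k : ℕ} (hk : k < n)
    (W : Matrix (Fin n) (Fin n) ℝ) (X : Matrix (Fin n) (Fin k) ℝ)
    (hX : X.rank = k)
    (M : Matrix (Fin n) (Fin n) ℝ)
    (hM : M = 1 - X * (Xᵀ * X)⁻¹ * Xᵀ)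
    (ω : ℝ) (hω : ∃ v : Fin n → ℝ, v ≠ 0 ∧ W.mulVec v = ω • v)
    (h : M * (ω • (1 : Matrix (Fin n) (Fin n) ℝ) - W) = 0)
    (lam : ℝ) (S : Matrix (Fin n) (Fin n) ℝ)
    (hS : S = (1 : Matrix (Fin n) (Fin n) ℝ) - lam • W)
    (hdet : S.det ≠ 0)
    (y : Fin n → ℝ) (hy : y ∉ LinearMap.range X.mulVecLin) :
    -(n / 2 : ℝ) * Real.log ((y ⬝ᵥ (Sᵀ * M * S).mulVec y) / n) +
        Real.log |S.det| =
      Real.log |S.det| - (n : ℝ) * Real.log |1 - lam * ω| -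
        (n / 2 : ℝ) * Real.log (y ⬝ᵥ M.mulVec y) +
        (n / 2 : ℝ) * Real.log n := by
  -- XᵀX is a unit
  have hXtX : IsUnit (Xᵀ * X) := by
    rw [← Matrix.mulVec_injective_iff_isUnit]
    have hker : LinearMap.ker (Xᵀ * X).mulVecLin = ⊥ := by
      rw [Matrix.ker_mulVecLin_transpose_mul_self]
      have h1 := LinearMap.finrank_range_add_finrank_ker X.mulVecLin
      rw [show Module.finrank ℝ (LinearMap.range X.mulVecLin) = k from hX] at h1
      simp only [Module.finrank_pi, Fintype.card_fin] at h1
      have h2 : Module.finrank ℝ (LinearMap.ker X.mulVecLin) = 0 := by omega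
      exact Submodule.finrank_eq_zero.mp h2
    have hinj := LinearMap.ker_eq_bot.mp hker
    intro a b hab
    exact hinj (show (Xᵀ * X).mulVecLin a = (Xᵀ * X).mulVecLin b from hab)
  have hinv : (Xᵀ * X)⁻¹ * (Xᵀ * X) = 1 :=
    Matrix.nonsing_inv_mul _ (hXtX.map (Matrix.detMonoidHom))
  -- M is symmetric
  have hMsym : Mᵀ = M := by
    have hsym : (Xᵀ * X)ᵀ = Xᵀ * X := by
      rw [Matrix.transpose_mul, Matrix.transpose_transpose]
    rw [hM]
    simp [Matrix.transpose_mul, Matrix.transpose_nonsing_inv, hsym, Matrix.mul_assoc]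
  -- M is idempotent
  have hPP : (X * (Xᵀ * X)⁻¹ * Xᵀ) * (X * (Xᵀ * X)⁻¹ * Xᵀ) = X * (Xᵀ * X)⁻¹ * Xᵀ := by
    have e1 : (X * (Xᵀ * X)⁻¹ * Xᵀ) * (X * (Xᵀ * X)⁻¹ * Xᵀ)
        = X * ((Xᵀ * X)⁻¹ * (Xᵀ * X) * ((Xᵀ * X)⁻¹ * Xᵀ)) := by
      simp only [Matrix.mul_assoc]
    rw [e1, hinv, Matrix.one_mul, ← Matrix.mul_assoc]
  have hMM : M * M = M := by
    rw [hM]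
    simp only [Matrix.sub_mul, Matrix.mul_sub, Matrix.one_mul, Matrix.mul_one, hPP]
    abel
  -- M y ≠ 0
  have hMy : M.mulVec y ≠ 0 := by
    intro h0
    apply hy
    refine ⟨((Xᵀ * X)⁻¹ * Xᵀ).mulVec y, ?_⟩
    have h1 : (1 - X * (Xᵀ * X)⁻¹ * Xᵀ).mulVec y = 0 := by rw [← hM]; exact h0
    rw [Matrix.sub_mulVec, Matrix.one_mulVec, sub_eq_zero] at h1
    rw [Matrix.mulVecLin_apply, Matrix.mulVec_mulVec, ← Matrix.mul_assoc]
    exact h1.symm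
  -- q := yᵀ M y > 0
  have hMtM : Mᵀ * M = M := by rw [hMsym, hMM]
  have hq : 0 < y ⬝ᵥ M.mulVec y := by
    have key : y ⬝ᵥ M.mulVec y = (M.mulVec y) ⬝ᵥ (M.mulVec y) := by
      conv_lhs => rw [← hMtM, ← Matrix.mulVec_mulVec, Matrix.dotProduct_mulVec,
        Matrix.vecMul_transpose]
    rw [key]
    rcases lt_or_eq_of_le (Finset.sum_nonneg fun i _ => mul_self_nonneg (M.mulVec y i)) with h' | h'
    · exact h'
    · exact absurd (dotProduct_self_eq_zero.mp h'.symm) hMy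
  -- M W = ω • M
  have hMW : M * W = ω • M := by
    have h2 : M * (ω • 1) - M * W = 0 := by rw [← Matrix.mul_sub]; exact h
    have h3 := sub_eq_zero.mp h2
    rw [Matrix.mul_smul, Matrix.mul_one] at h3
    exact h3.symm
  -- M S = c • M
  set c : ℝ := 1 - lam * ω with hc
  have hMS : M * S = c • M := by
    rw [hS, Matrix.mul_sub, Matrix.mul_one, Matrix.mul_smul, hMW, hc, sub_smul, one_smul,
      smul_smul]
  -- Sᵀ M = c • M
  have hSM : Sᵀ * M = c • M := by
    have := congrArg Matrix.transpose hMS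
    rw [Matrix.transpose_mul, hMsym, Matrix.transpose_smul, hMsym] at this
    exact this
  -- Sᵀ M S = c² • M
  have hSMS : Sᵀ * M * S = (c ^ 2) • M := by
    rw [Matrix.mul_assoc, hMS, Matrix.mul_smul, hSM, smul_smul, sq]
  -- c ≠ 0
  have hcne : c ≠ 0 := by
    intro h0
    rw [h0, zero_smul] at hMS
    have hM0 : M = 0 := by
      have hSu : IsUnit S.det := isUnit_iff_ne_zero.mpr hdet
      calc M = M * S * S⁻¹ := by
              rw [Matrix.mul_assoc, Matrix.mul_nonsing_inv _ hSu, Matrix.mul_one]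
        _ = 0 := by rw [hMS, Matrix.zero_mul]
    rw [hM0] at hq
    simp at hq
  -- quadratic form value
  have hquad : y ⬝ᵥ (Sᵀ * M * S).mulVec y = c ^ 2 * (y ⬝ᵥ M.mulVec y) := by
    rw [hSMS, Matrix.smul_mulVec, dotProduct_smul, smul_eq_mul]
  have hn0 : 0 < n := lt_of_le_of_lt (Nat.zero_le k) hk
  have hn : (0 : ℝ) < n := by exact_mod_cast hn0
  have hc2 : (0 : ℝ) < c ^ 2 := by positivity
  rw [hquad]
  have hlc : Real.log (c ^ 2) = 2 * Real.log |c| := by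
    rw [← sq_abs c, Real.log_pow]
    push_cast
    ring
  have hlog : Real.log (c ^ 2 * (y ⬝ᵥ M.mulVec y) / n)
      = 2 * Real.log |c| + Real.log (y ⬝ᵥ M.mulVec y) - Real.log n := by
    rw [Real.log_div (by positivity) (ne_of_gt hn), Real.log_mul (ne_of_gt hc2) (ne_of_gt hq), hlc]
  rw [hlog]
  ring
end
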